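/- arXiv:2204.03787 — 2 statements merged into one kernel-verified Lean document; each statement's English description precedes it below -/
import Mathlib

section
/- Let G = K_{n₁,n₂,…,n_r} be the complete r-partite graph of order n = n₁ + n₂ + ⋯ + n_r with n ≥ 4, and let α ∈ [0,1]. Then for every i ∈ {1,2,…,r}, the number α(n − n_i/2) − ½ is an eigenvalue of RD_α(G) with multiplicity at least n_i − 1. -/
open Matrix BigOperators Finset

/-- The reciprocal distance (Harary) matrix of a graph. -/
noncomputable def RDmat {V : Type*} [Fintype V] [DecidableEq V] (G : SimpleGraph V) :
    Matrix V V ℝ :=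
  Matrix.of fun i j => if i = j then 0 else (1 : ℝ) / (G.dist i j)

/-- The reciprocal transmission of a vertex. -/
noncomputable def RTr {V : Type*} [Fintype V] [DecidableEq V] (G : SimpleGraph V) (v : V) : ℝ :=
  ∑ u ∈ Finset.univ.erase v, (1 : ℝ) / (G.dist u v)

/-- The generalized reciprocal distance matrix `RD_α(G) = α RT(G) + (1-α) RD(G)`. -/
noncomputable def RDalpha {V : Type*} [Fintype V] [DecidableEq V] (G : SimpleGraph V) (α : ℝ) :
    Matrix V V ℝ :=
  α • Matrix.diagonal (RTr G) + (1 - α) • RDmat G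

/-- The `i`-th largest eigenvalue (1-indexed, with multiplicity) of a real matrix,
obtained from the roots of its characteristic polynomial sorted decreasingly. -/
noncomputable def eigDesc {V : Type*} [Fintype V] [DecidableEq V] (M : Matrix V V ℝ) (i : ℕ) : ℝ :=
  ((M.charpoly.roots.sort (· ≤ ·)).reverse).getD (i - 1) 0

/-- The spectral radius (largest eigenvalue) of a real symmetric matrix. -/
noncomputable def specRadius {V : Type*} [Fintype V] [DecidableEq V] (M : Matrix V V ℝ) : ℝ :=
  eigDesc M 1

/-- The join of two graphs. -/
def gjoin {V₁ V₂ : Type*} (G₁ : SimpleGraph V₁) (G₂ : SimpleGraph V₂) :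
    SimpleGraph (V₁ ⊕ V₂) where
  Adj x y := match x, y with
    | Sum.inl a, Sum.inl b => G₁.Adj a b
    | Sum.inr a, Sum.inr b => G₂.Adj a b
    | Sum.inl _, Sum.inr _ => True
    | Sum.inr _, Sum.inl _ => True
  symm := ⟨by rintro (a|a) (b|b) h <;> first | exact G₁.adj_symm h | exact G₂.adj_symm h | trivial⟩
  loopless := ⟨by rintro (a|a) h <;> first | exact G₁.ne_of_adj h rfl | exact G₂.ne_of_adj h rfl⟩

/-!
Two vertices `p ≠ q` in the same part are twins: every other vertex is at the same distance
from both, so `RTr p = RTr q` and `e_p - e_q` is an eigenvector of `RD_α` with eigenvalue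
`α RTr p - (1 - α) / d(p, q) = α (n - nᵢ/2 - 1/2) - (1 - α)/2`. Fixing `p` and letting `q` run
over the other `nᵢ - 1` vertices of its part gives that many independent eigenvectors, and the
geometric multiplicity of an eigenvalue bounds its algebraic multiplicity from below.
-/

lemma Matrix.card_le_count_roots_charpoly {K ι κ : Type*} [Field K] [DecidableEq K] [Fintype ι]
    [DecidableEq ι] [Fintype κ] (A : Matrix ι ι K) (μ : K) (v : κ → ι → K)
    (hv : LinearIndependent K v) (hAv : ∀ l, A *ᵥ v l = μ • v l) :
    Fintype.card κ ≤ A.charpoly.roots.count μ := by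
  have hspan : Submodule.span K (Set.range v) ≤ Module.End.eigenspace (toLin' A) μ := by
    rw [Submodule.span_le]
    rintro _ ⟨l, rfl⟩
    simpa [Module.End.mem_eigenspace_iff] using hAv l
  calc Fintype.card κ = Module.finrank K (Submodule.span K (Set.range v)) :=
        (finrank_span_eq_card hv).symm
    _ ≤ Module.finrank K (Module.End.eigenspace (toLin' A) μ) := Submodule.finrank_mono hspan
    _ ≤ (toLin' A).charpoly.rootMultiplicity μ := LinearMap.finrank_eigenspace_le _ _
    _ = A.charpoly.roots.count μ := by rw [charpoly_toLin', Polynomial.count_roots]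

lemma linearIndependent_single_sub_single {R ι κ : Type*} [Ring R] [DecidableEq ι] [Fintype κ]
    {p : ι} {q : κ → ι} (hq : Function.Injective q) (hpq : ∀ l, p ≠ q l) :
    LinearIndependent R fun l => (Pi.single p 1 - Pi.single (q l) 1 : ι → R) := by
  rw [Fintype.linearIndependent_iff]
  intro c hc l
  classical
  have h := congr_fun hc (q l)
  simpa [Finset.sum_apply, Pi.single_apply, (hpq l).symm, hq.eq_iff] using h

section Twins
variable {V : Type*} [Fintype V] [DecidableEq V] {G : SimpleGraph V}

-- The diagonal term of the sum is `1 / 0 = 0`.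
lemma RTr_eq_sum (v : V) : RTr G v = ∑ u, (1 : ℝ) / G.dist u v :=
  Finset.sum_erase _ (by simp)

lemma RDalpha_apply (α : ℝ) (a b : V) :
    RDalpha G α a b = if a = b then α * RTr G a else (1 - α) / G.dist a b := by
  by_cases h : a = b <;> simp [RDalpha, RDmat, h, div_eq_mul_inv]

variable {p q : V}

lemma RTr_eq_of_twins (htwin : ∀ a, a ≠ p → a ≠ q → G.dist a p = G.dist a q) :
    RTr G q = RTr G p := by
  have hswap : ∀ u, G.dist (Equiv.swap p q u) q = G.dist u p := by
    intro u
    rcases eq_or_ne u p with rfl | hup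
    · simp
    rcases eq_or_ne u q with rfl | huq
    · simp [G.dist_comm]
    · rw [Equiv.swap_apply_of_ne_of_ne hup huq, htwin u hup huq]
  rw [RTr_eq_sum, RTr_eq_sum, ← Equiv.sum_comp (Equiv.swap p q)]
  simp only [hswap]

lemma RDalpha_mulVec_single_sub_single (α : ℝ) (hpq : p ≠ q)
    (htwin : ∀ a, a ≠ p → a ≠ q → G.dist a p = G.dist a q) :
    RDalpha G α *ᵥ (Pi.single p 1 - Pi.single q 1) =
      (α * RTr G p - (1 - α) / G.dist p q) • (Pi.single p 1 - Pi.single q 1) := by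
  funext a
  simp only [mulVec_sub, mulVec_single_one, Pi.sub_apply, col_apply, RDalpha_apply,
    Pi.smul_apply, Pi.single_apply, smul_eq_mul]
  rcases eq_or_ne a p with rfl | hap
  · simp [hpq]
  rcases eq_or_ne a q with rfl | haq
  · simp [hap, RTr_eq_of_twins htwin, G.dist_comm]
  · simp [hap, haq, htwin a hap haq]

end Twins

namespace SimpleGraph.completeMultipartiteGraph
variable {ι : Type*} {V : ι → Type*}

lemma dist_of_fst_ne {u w : Σ i, V i} (h : u.1 ≠ w.1) :
    (completeMultipartiteGraph V).dist u w = 1 :=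
  dist_eq_one_iff_adj.mpr h

lemma dist_of_fst_eq (hconn : (completeMultipartiteGraph V).Connected) {u w : Σ i, V i}
    (hne : u ≠ w) (h : u.1 = w.1) : (completeMultipartiteGraph V).dist u w = 2 := by
  obtain ⟨W⟩ := hconn.preconnected u w
  cases W with
  | nil => exact absurd rfl hne
  | @cons _ z _ huz _ =>
    have hzw : (completeMultipartiteGraph V).Adj z w := by
      change z.1 ≠ w.1
      exact h ▸ Ne.symm huz
    have hle := dist_le (.cons huz (.cons hzw .nil))
    have hlt := hconn.one_lt_dist_of_ne_of_not_adj hne (fun h' : u.1 ≠ w.1 => h' h)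
    simp only [Walk.length_cons, Walk.length_nil] at hle
    omega

lemma dist_eq_dist_of_fst_eq (hconn : (completeMultipartiteGraph V).Connected)
    {a u w : Σ i, V i} (hau : a ≠ u) (haw : a ≠ w) (h : u.1 = w.1) :
    (completeMultipartiteGraph V).dist a u = (completeMultipartiteGraph V).dist a w := by
  by_cases ha : a.1 = u.1
  · rw [dist_of_fst_eq hconn hau ha, dist_of_fst_eq hconn haw (ha.trans h)]
  · rw [dist_of_fst_ne ha, dist_of_fst_ne (h ▸ ha)]

lemma RTr_eq [Fintype ι] [DecidableEq ι] [∀ i, Fintype (V i)] [∀ i, DecidableEq (V i)]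
    (hconn : (completeMultipartiteGraph V).Connected) (p : Σ i, V i) :
    RTr (completeMultipartiteGraph V) p =
      Fintype.card (Σ i, V i) - (Fintype.card (V p.1) : ℝ) / 2 - 1 / 2 := by
  have hterm : ∀ u : Σ i, V i, (1 : ℝ) / (completeMultipartiteGraph V).dist u p =
      1 - (if u.1 = p.1 then 1 / 2 else 0) - if u = p then 1 / 2 else 0 := by
    intro u
    rcases eq_or_ne u p with rfl | hup
    · norm_num
    by_cases h : u.1 = p.1
    · norm_num [dist_of_fst_eq hconn hup h, h, hup]
    · simp [dist_of_fst_ne h, h, hup]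
  have hpart : ∑ u : Σ i, V i, (if u.1 = p.1 then (1 : ℝ) / 2 else 0) =
      Fintype.card (V p.1) / 2 := by
    rw [Fintype.sum_sigma]
    -- restate the summand so that its `Decidable` instance no longer mentions the inner variable
    simp only [show ∀ j (y : V j), (if (⟨j, y⟩ : Σ i, V i).1 = p.1 then (1 : ℝ) / 2 else 0) =
      if j = p.1 then 1 / 2 else 0 from fun _ _ => rfl]
    simp [div_eq_mul_inv]
  rw [RTr_eq_sum, Finset.sum_congr rfl fun u _ => hterm u, Finset.sum_sub_distrib,
    Finset.sum_sub_distrib, hpart]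
  simp

end SimpleGraph.completeMultipartiteGraph

theorem stmt4_general (r : ℕ) (n : Fin r → ℕ)
    (hconn : (SimpleGraph.completeMultipartiteGraph (fun i => Fin (n i))).Connected)
    (α : ℝ) (i : Fin r) :
    n i - 1 ≤ (RDalpha (SimpleGraph.completeMultipartiteGraph (fun i => Fin (n i))) α).charpoly.roots.count
      (α * ((∑ j, n j : ℕ) - (n i : ℝ) / 2) - 1 / 2) := by
  obtain hni | hni := le_or_gt (n i) 1
  · simp [Nat.sub_eq_zero_of_le hni]
  let p : Σ j, Fin (n j) := ⟨i, ⟨0, by omega⟩⟩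
  let q : Fin (n i - 1) → Σ j, Fin (n j) := fun l => ⟨i, ⟨l + 1, by omega⟩⟩
  have hq : Function.Injective q := fun l m h => Fin.ext (by simpa [q] using h)
  have hpq : ∀ l, p ≠ q l := fun l h => by simp [q, p] at h
  have heig : ∀ l, RDalpha (SimpleGraph.completeMultipartiteGraph _) α *ᵥ
      (Pi.single p 1 - Pi.single (q l) 1) = (α * ((∑ j, n j : ℕ) - (n i : ℝ) / 2) - 1 / 2) •
      (Pi.single p 1 - Pi.single (q l) 1) := by
    intro l
    rw [RDalpha_mulVec_single_sub_single α (hpq l) fun a hap haq =>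
        SimpleGraph.completeMultipartiteGraph.dist_eq_dist_of_fst_eq hconn hap haq rfl,
      SimpleGraph.completeMultipartiteGraph.RTr_eq hconn,
      SimpleGraph.completeMultipartiteGraph.dist_of_fst_eq hconn (hpq l) rfl]
    simp only [Fintype.card_sigma, Fintype.card_fin]
    congr 1
    push_cast
    ring
  simpa using Matrix.card_le_count_roots_charpoly _ _ _
    (linearIndependent_single_sub_single hq hpq) heig

/-- Theorem 2.8(i): eigenvalues of `RD_α` of the complete multipartite graph. -/
theorem stmt4 (r : ℕ) (n : Fin r → ℕ)
    (hconn : (SimpleGraph.completeMultipartiteGraph (fun i => Fin (n i))).Connected)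
    (hn : 4 ≤ ∑ i, n i) (α : ℝ) (hα : α ∈ Set.Icc (0 : ℝ) 1) (i : Fin r) :
    n i - 1 ≤ (RDalpha (SimpleGraph.completeMultipartiteGraph (fun i => Fin (n i))) α).charpoly.roots.count
      (α * ((∑ j, n j : ℕ) - (n i : ℝ) / 2) - 1 / 2) :=
  stmt4_general r n hconn α i
end

section
/- Let G be a connected graph on n vertices, let e be an edge not in E(G), and let G̃ = G + e be the graph obtained by adding e. Then for every α with ½ ≤ α ≤ 1 and every i with 1 ≤ i ≤ n, we have λ_i(RD_α(G̃)) ≥ λ_i(RD_α(G)). -/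
/-!
Adding edges only shortens distances, so `W = RD(G + e) - RD(G)` is a symmetric matrix with
nonnegative entries, and `RD_α(G + e) - RD_α(G) = α D(W) + (1 - α) W` with `D(W)` the diagonal
matrix of row sums of `W`. Its quadratic form is
`½ ∑ᵢⱼ Wᵢⱼ ((xᵢ + xⱼ)² / 2 + (α - ½)(xᵢ - xⱼ)²) ≥ 0` for `α ≥ ½`, so `RD_α(G) ≤ RD_α(G + e)` in the
Loewner order. Weyl's monotonicity principle then compares the eigenvalues one by one: for
symmetric `S ≤ T` on an `n`-dimensional space, the span of the eigenvectors of `S` for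
`λ₀(S), …, λₖ(S)` and the span of those of `T` for `λₖ(T), …, λₙ₋₁(T)` have dimensions adding up
to `n + 1`, so they share some `x ≠ 0`, and `λₖ(S) ‖x‖² ≤ ⟪x, S x⟫ ≤ ⟪x, T x⟫ ≤ λₖ(T) ‖x‖²`.
-/

open Matrix BigOperators Finset

open Module Submodule
open scoped InnerProductSpace ComplexOrder

namespace OrthonormalBasis
variable {ι 𝕜 E : Type*} [RCLike 𝕜] [NormedAddCommGroup E] [InnerProductSpace 𝕜 E] [Fintype ι]

theorem finrank_span_image (b : OrthonormalBasis ι 𝕜 E) (s : Finset ι) :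
    finrank 𝕜 (span 𝕜 (b '' s)) = s.card := by
  rw [Set.image_eq_range]
  exact (finrank_span_eq_card
    (b.orthonormal.linearIndependent.comp _ Subtype.val_injective)).trans (Fintype.card_coe s)

theorem norm_sq_eq_sum_repr (b : OrthonormalBasis ι 𝕜 E) (x : E) :
    ‖x‖ ^ 2 = ∑ j, ‖b.repr x j‖ ^ 2 := by
  rw [← b.repr.norm_map, EuclideanSpace.norm_sq_eq]

theorem repr_eq_zero_of_mem_span_image (b : OrthonormalBasis ι 𝕜 E) {s : Set ι} {x : E}
    (hx : x ∈ span 𝕜 (b '' s)) {j : ι} (hj : j ∉ s) : b.repr x j = 0 := by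
  rw [b.repr_apply_apply]
  induction hx using Submodule.span_induction with
  | mem y hy =>
    obtain ⟨i, hi, rfl⟩ := hy
    exact b.orthonormal.2 (ne_of_mem_of_not_mem hi hj).symm
  | zero => exact inner_zero_right _
  | add y z _ _ hy hz => rw [inner_add_right, hy, hz, add_zero]
  | smul a y _ hy => rw [inner_smul_right, hy, mul_zero]

end OrthonormalBasis

namespace LinearMap.IsSymmetric
variable {𝕜 E : Type*} [RCLike 𝕜] [NormedAddCommGroup E] [InnerProductSpace 𝕜 E]
  [FiniteDimensional 𝕜 E] {T : E →ₗ[𝕜] E} {n : ℕ} (hT : T.IsSymmetric) (hn : finrank 𝕜 E = n)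

theorem re_inner_apply_self_eq_sum (x : E) :
    RCLike.re ⟪x, T x⟫_𝕜 =
      ∑ j, hT.eigenvalues hn j * ‖(hT.eigenvectorBasis hn).repr x j‖ ^ 2 := by
  rw [← (hT.eigenvectorBasis hn).repr.inner_map_map, PiLp.inner_apply, map_sum]
  refine Finset.sum_congr rfl fun j _ => ?_
  rw [eigenvectorBasis_apply_self_apply, RCLike.inner_apply, mul_assoc, RCLike.mul_conj,
    ← RCLike.ofReal_pow, ← RCLike.ofReal_mul, RCLike.ofReal_re]

theorem re_inner_apply_self_le_of_mem_span {s : Set (Fin n)} {c : ℝ}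
    (hc : ∀ j ∈ s, hT.eigenvalues hn j ≤ c) {x : E}
    (hx : x ∈ span 𝕜 (hT.eigenvectorBasis hn '' s)) :
    RCLike.re ⟪x, T x⟫_𝕜 ≤ c * ‖x‖ ^ 2 := by
  rw [hT.re_inner_apply_self_eq_sum hn, (hT.eigenvectorBasis hn).norm_sq_eq_sum_repr,
    Finset.mul_sum]
  refine Finset.sum_le_sum fun j _ => ?_
  by_cases hj : j ∈ s
  · exact mul_le_mul_of_nonneg_right (hc j hj) (sq_nonneg _)
  · simp [(hT.eigenvectorBasis hn).repr_eq_zero_of_mem_span_image hx hj]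

theorem le_re_inner_apply_self_of_mem_span {s : Set (Fin n)} {c : ℝ}
    (hc : ∀ j ∈ s, c ≤ hT.eigenvalues hn j) {x : E}
    (hx : x ∈ span 𝕜 (hT.eigenvectorBasis hn '' s)) :
    c * ‖x‖ ^ 2 ≤ RCLike.re ⟪x, T x⟫_𝕜 := by
  rw [hT.re_inner_apply_self_eq_sum hn, (hT.eigenvectorBasis hn).norm_sq_eq_sum_repr,
    Finset.mul_sum]
  refine Finset.sum_le_sum fun j _ => ?_
  by_cases hj : j ∈ s
  · exact mul_le_mul_of_nonneg_right (hc j hj) (sq_nonneg _)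
  · simp [(hT.eigenvectorBasis hn).repr_eq_zero_of_mem_span_image hx hj]

theorem eigenvalues_le_of_isPositive_sub {S : E →ₗ[𝕜] E} (hS : S.IsSymmetric)
    (hTS : (T - S).IsPositive) (k : Fin n) :
    hS.eigenvalues hn k ≤ hT.eigenvalues hn k := by
  set W := span 𝕜 (hS.eigenvectorBasis hn '' ↑(Finset.Iic k))
  set U := span 𝕜 (hT.eigenvectorBasis hn '' ↑(Finset.Ici k))
  have hWU : ¬ Disjoint W U := by
    intro h
    have := finrank_add_finrank_le_of_disjoint h
    rw [(hS.eigenvectorBasis hn).finrank_span_image, (hT.eigenvectorBasis hn).finrank_span_image,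
      Fin.card_Iic, Fin.card_Ici, hn] at this
    omega
  obtain ⟨x, hxW, hxU, hx⟩ : ∃ x ∈ W, x ∈ U ∧ x ≠ 0 := by
    simpa [Submodule.disjoint_def] using hWU
  have hSx : hS.eigenvalues hn k * ‖x‖ ^ 2 ≤ RCLike.re ⟪x, S x⟫_𝕜 :=
    hS.le_re_inner_apply_self_of_mem_span hn
      (fun j hj => hS.eigenvalues_antitone hn (Finset.mem_Iic.mp hj)) hxW
  have hSTx : RCLike.re ⟪x, S x⟫_𝕜 ≤ RCLike.re ⟪x, T x⟫_𝕜 := by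
    simpa [inner_sub_right] using hTS.re_inner_nonneg_right x
  have hTx : RCLike.re ⟪x, T x⟫_𝕜 ≤ hT.eigenvalues hn k * ‖x‖ ^ 2 :=
    hT.re_inner_apply_self_le_of_mem_span hn
      (fun j hj => hT.eigenvalues_antitone hn (Finset.mem_Ici.mp hj)) hxU
  exact le_of_mul_le_mul_right ((hSx.trans hSTx).trans hTx) (by positivity)

end LinearMap.IsSymmetric

namespace Matrix.IsHermitian
variable {𝕜 n : Type*} [RCLike 𝕜] [Fintype n] [DecidableEq n]

theorem eigenvalues₀_le_of_posSemidef_sub {A B : Matrix n n 𝕜} (hA : A.IsHermitian)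
    (hB : B.IsHermitian) (hBA : (B - A).PosSemidef) (k : Fin (Fintype.card n)) :
    hA.eigenvalues₀ k ≤ hB.eigenvalues₀ k :=
  LinearMap.IsSymmetric.eigenvalues_le_of_isPositive_sub _ _ _
    (by rwa [← map_sub, isPositive_toEuclideanLin_iff]) k

theorem reverse_sort_roots_charpoly_eq_eigenvalues₀ {A : Matrix n n ℝ} (hA : A.IsHermitian) :
    (A.charpoly.roots.sort (· ≤ ·)).reverse = List.ofFn hA.eigenvalues₀ := by
  have hperm : (A.charpoly.roots.sort (· ≤ ·)).Perm (List.ofFn hA.eigenvalues₀) := by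
    rw [← Multiset.coe_eq_coe, Multiset.sort_eq, hA.roots_charpoly_eq_eigenvalues₀,
      ← Fin.univ_val_map]
    rfl
  rw [hperm.eq_reverse_of_sortedLE_of_sortedGE
    (List.sortedLE_iff_pairwise.mpr (Multiset.pairwise_sort _ _))
    hA.eigenvalues₀_antitone.sortedGE_ofFn, List.reverse_reverse]

end Matrix.IsHermitian

theorem eigDesc_le_of_posSemidef_sub {V : Type*} [Fintype V] [DecidableEq V]
    {A B : Matrix V V ℝ} (hA : A.IsHermitian) (hB : B.IsHermitian) (hBA : (B - A).PosSemidef)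
    (i : ℕ) : eigDesc A i ≤ eigDesc B i := by
  rw [eigDesc, eigDesc, hA.reverse_sort_roots_charpoly_eq_eigenvalues₀,
    hB.reverse_sort_roots_charpoly_eq_eigenvalues₀, List.getD_eq_getElem?_getD,
    List.getD_eq_getElem?_getD]
  simp only [List.getElem?_ofFn]
  split_ifs
  · exact hA.eigenvalues₀_le_of_posSemidef_sub hB hBA _
  · rfl

namespace Matrix
variable {n : Type*} [Fintype n] [DecidableEq n]

/-- Nikiforov's `A_α` construction, applied to a weighted adjacency matrix `W`. -/
noncomputable def alphaMatrix (α : ℝ) (W : Matrix n n ℝ) : Matrix n n ℝ :=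
  α • diagonal (fun i => ∑ j, W i j) + (1 - α) • W

theorem alphaMatrix_sub (α : ℝ) (W W' : Matrix n n ℝ) :
    alphaMatrix α (W' - W) = alphaMatrix α W' - alphaMatrix α W := by
  simp only [alphaMatrix, sub_apply, sum_sub_distrib, ← diagonal_sub, smul_sub]
  abel

theorem IsSymm.isHermitian_alphaMatrix {W : Matrix n n ℝ} (hW : W.IsSymm) (α : ℝ) :
    (alphaMatrix α W).IsHermitian :=
  isHermitian_iff_isSymm.mpr (((isSymm_diagonal _).smul α).add (hW.smul (1 - α)))

theorem dotProduct_alphaMatrix_mulVec {W : Matrix n n ℝ} (hW : W.IsSymm) (α : ℝ) (x : n → ℝ) :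
    x ⬝ᵥ alphaMatrix α W *ᵥ x =
      ∑ i, ∑ j, W i j * ((x i + x j) ^ 2 / 2 + (α - 1 / 2) * (x i - x j) ^ 2) / 2 := by
  have hswap : ∑ i, ∑ j, W i j * x j ^ 2 = ∑ i, ∑ j, W i j * x i ^ 2 := by
    rw [Finset.sum_comm]
    exact Finset.sum_congr rfl fun i _ => Finset.sum_congr rfl fun j _ => by rw [hW.apply]
  have hlhs : x ⬝ᵥ alphaMatrix α W *ᵥ x =
      α * ∑ i, ∑ j, W i j * x i ^ 2 + (1 - α) * ∑ i, ∑ j, W i j * (x i * x j) := by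
    rw [alphaMatrix, add_mulVec, smul_mulVec, smul_mulVec, dotProduct_add,
      dotProduct_smul, dotProduct_smul, smul_eq_mul, smul_eq_mul]
    simp only [dotProduct, mulVec_diagonal]
    simp only [mulVec, dotProduct, Finset.mul_sum, Finset.sum_mul]
    congr 1 <;> refine Finset.sum_congr rfl fun i _ => Finset.sum_congr rfl fun j _ => by ring
  have hrhs : ∑ i, ∑ j, W i j * ((x i + x j) ^ 2 / 2 + (α - 1 / 2) * (x i - x j) ^ 2) / 2 =
      α / 2 * ∑ i, ∑ j, W i j * x i ^ 2 + α / 2 * ∑ i, ∑ j, W i j * x j ^ 2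
        + (1 - α) * ∑ i, ∑ j, W i j * (x i * x j) := by
    simp only [Finset.mul_sum, ← Finset.sum_add_distrib]
    exact Finset.sum_congr rfl fun i _ => Finset.sum_congr rfl fun j _ => by ring
  rw [hlhs, hrhs, hswap]
  ring

theorem posSemidef_alphaMatrix {W : Matrix n n ℝ} (hW : W.IsSymm) (hW₀ : ∀ i j, 0 ≤ W i j)
    {α : ℝ} (hα : 1 / 2 ≤ α) : (alphaMatrix α W).PosSemidef := by
  refine PosSemidef.of_dotProduct_mulVec_nonneg (hW.isHermitian_alphaMatrix α) fun x => ?_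
  rw [star_trivial, dotProduct_alphaMatrix_mulVec hW]
  have hα' : 0 ≤ α - 1 / 2 := by linarith
  exact Finset.sum_nonneg fun i _ => Finset.sum_nonneg fun j _ => by
    have := hW₀ i j
    positivity

end Matrix

section RDmat
variable {V : Type*} [Fintype V] [DecidableEq V]

theorem RDmat_isSymm (G : SimpleGraph V) : (RDmat G).IsSymm :=
  IsSymm.ext fun i j => by simp only [RDmat, of_apply, eq_comm, SimpleGraph.dist_comm]

theorem RTr_eq_sum_RDmat (G : SimpleGraph V) (v : V) : RTr G v = ∑ u, RDmat G v u := by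
  rw [RTr, ← Finset.sum_erase _ (by simp [RDmat] : RDmat G v v = 0)]
  refine Finset.sum_congr rfl fun u hu => ?_
  simp [RDmat, (Finset.ne_of_mem_erase hu).symm, SimpleGraph.dist_comm]

theorem RDalpha_eq_alphaMatrix (G : SimpleGraph V) (α : ℝ) :
    RDalpha G α = alphaMatrix α (RDmat G) := by
  rw [RDalpha, alphaMatrix, funext (RTr_eq_sum_RDmat G)]

theorem isHermitian_RDalpha (G : SimpleGraph V) (α : ℝ) : (RDalpha G α).IsHermitian := by
  rw [RDalpha_eq_alphaMatrix]
  exact (RDmat_isSymm G).isHermitian_alphaMatrix α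

theorem one_div_dist_le_of_le {G G' : SimpleGraph V} (h : G ≤ G') {u v : V} (huv : u ≠ v) :
    1 / (G.dist u v : ℝ) ≤ 1 / G'.dist u v := by
  by_cases hr : G.Reachable u v
  · have hpos : (0 : ℝ) < G'.dist u v := by exact_mod_cast (hr.mono h).pos_dist_of_ne huv
    exact one_div_le_one_div_of_le hpos (by exact_mod_cast hr.dist_anti h)
  · -- `G.dist u v = 0` when `v` is unreachable from `u`, and `1 / 0 = 0`.
    simp [SimpleGraph.dist_eq_zero_of_not_reachable hr]

theorem RDmat_le_of_le {G G' : SimpleGraph V} (h : G ≤ G') (u v : V) :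
    RDmat G u v ≤ RDmat G' u v := by
  by_cases huv : u = v
  · simp [RDmat, huv]
  · simpa [RDmat, huv] using one_div_dist_le_of_le h huv

theorem posSemidef_RDalpha_sub_of_le {G G' : SimpleGraph V} (h : G ≤ G') {α : ℝ}
    (hα : 1 / 2 ≤ α) : (RDalpha G' α - RDalpha G α).PosSemidef := by
  rw [RDalpha_eq_alphaMatrix, RDalpha_eq_alphaMatrix, ← alphaMatrix_sub]
  exact posSemidef_alphaMatrix ((RDmat_isSymm G').sub (RDmat_isSymm G))
    (fun u v => sub_nonneg.mpr (RDmat_le_of_le h u v)) hα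

end RDmat

theorem stmt5_general {V : Type*} [Fintype V] [DecidableEq V] (G : SimpleGraph V)
    (u v : V)
    (α : ℝ) (hα : α ∈ Set.Icc (1 / 2 : ℝ) 1)
    (i : ℕ) :
    eigDesc (RDalpha (G ⊔ SimpleGraph.fromEdgeSet {s(u, v)}) α) i ≥
      eigDesc (RDalpha G α) i :=
  eigDesc_le_of_posSemidef_sub (isHermitian_RDalpha G α) (isHermitian_RDalpha _ α)
    (posSemidef_RDalpha_sub_of_le le_sup_left hα.1) i

/-- Proposition 3.2: for `1/2 ≤ α ≤ 1`, adding an edge does not decrease any eigenvalue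
of `RD_α`. -/
theorem stmt5 {V : Type*} [Fintype V] [DecidableEq V] (G : SimpleGraph V) (hG : G.Connected)
    (u v : V) (huv : u ≠ v) (he : ¬ G.Adj u v)
    (α : ℝ) (hα : α ∈ Set.Icc (1 / 2 : ℝ) 1)
    (i : ℕ) (hi1 : 1 ≤ i) (hin : i ≤ Fintype.card V) :
    eigDesc (RDalpha (G ⊔ SimpleGraph.fromEdgeSet {s(u, v)}) α) i ≥
      eigDesc (RDalpha G α) i :=
  stmt5_general G u v α hα i
end
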